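/- arXiv:1906.05985 — 3 statements merged into one kernel-verified Lean document; each statement's English description precedes it below -/
import Mathlib

section
/- Let n ≥ 1 and let B : ℝ × ℝ² → M(n,ℝ) be such that for each x ∈ ℝ² the map t ↦ B(t,x) is differentiable, for each t ∈ ℝ the map x ↦ B(t,x) is twice continuously differentiable, and for all (t,x) one has ∂_t B(t,x) = (1/2)·(Δ_x B(t,x)·B(t,x)ᵀ − B(t,x)·(Δ_x B(t,x))ᵀ)·B(t,x), where Δ_x denotes the entrywise Laplacian in x. If B(0,x)ᵀ·B(0,x) = I for every x ∈ ℝ², then B(t,x)ᵀ·B(t,x) = I for every t ∈ ℝ and every x ∈ ℝ², i.e. B(t,x) is an orthogonal matrix for all t and x. -/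
/-!
Write the equation as `∂ₜB = A B` with `A = ½(Δₓ B · Bᵀ - B · (Δₓ B)ᵀ)`. The generator
`A` is skew-symmetric, so `∂ₜ(BᵀB) = Bᵀ(Aᵀ + A)B = 0`, and `BᵀB` stays equal to its initial
value `1` at every point `x`.
-/

open Matrix

attribute [local instance] Matrix.frobeniusNormedAddCommGroup Matrix.frobeniusNormedSpace

/-- The entrywise Laplacian `Δu = ∂²u/∂x₁² + ∂²u/∂x₂²` of a function `u : ℝ² → E`. -/
noncomputable def lap {E : Type*} [NormedAddCommGroup E] [NormedSpace ℝ E]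
    (u : ℝ × ℝ → E) (x : ℝ × ℝ) : E :=
  deriv (fun s => deriv (fun s' => u (s', x.2)) s) x.1 +
    deriv (fun s => deriv (fun s' => u (x.1, s')) s) x.2

attribute [local instance] Matrix.frobeniusNormedRing Matrix.frobeniusNormedAlgebra

section

variable {𝕜 m n : Type*} [Fintype m] [Fintype n]

theorem HasDerivAt.matrix_transpose [NontriviallyNormedField 𝕜] [CompleteSpace 𝕜]
    {B : 𝕜 → Matrix m n 𝕜} {B' : Matrix m n 𝕜} {t : 𝕜} (h : HasDerivAt B B' t) :
    HasDerivAt (fun s => (B s)ᵀ) B'ᵀ t :=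
  (LinearMap.toContinuousLinearMap
    (transposeLinearEquiv m n 𝕜 𝕜).toLinearMap).hasFDerivAt.comp_hasDerivAt t h

variable [RCLike 𝕜] [DecidableEq m]

theorem hasDerivAt_transpose_mul_self_of_skew {B : 𝕜 → Matrix m m 𝕜} {A : Matrix m m 𝕜}
    {t : 𝕜} (hA : Aᵀ = -A) (h : HasDerivAt B (A * B t) t) :
    HasDerivAt (fun s => (B s)ᵀ * B s) 0 t := by
  refine (h.matrix_transpose.mul h).congr_deriv ?_
  rw [transpose_mul, hA, Matrix.mul_neg, neg_mul, ← Matrix.mul_assoc, neg_add_cancel]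

theorem transpose_mul_self_eq_of_skew {B : 𝕜 → Matrix m m 𝕜} {A : 𝕜 → Matrix m m 𝕜}
    (hA : ∀ t, (A t)ᵀ = -A t) (h : ∀ t, HasDerivAt B (A t * B t) t) (s t : 𝕜) :
    (B t)ᵀ * B t = (B s)ᵀ * B s :=
  have hderiv t := hasDerivAt_transpose_mul_self_of_skew (hA t) (h t)
  is_const_of_deriv_eq_zero (fun t => (hderiv t).differentiableAt) (fun t => (hderiv t).deriv) t s

end

theorem transpose_mul_transpose_sub_mul_transpose {R m : Type*} [CommRing R] [Fintype m]
    (L C : Matrix m m R) :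
    (L * Cᵀ - C * Lᵀ)ᵀ = -(L * Cᵀ - C * Lᵀ) := by
  rw [transpose_sub, transpose_mul, transpose_mul, transpose_transpose, transpose_transpose,
    neg_sub]

theorem stmt1_general (n : ℕ) (B : ℝ → ℝ × ℝ → Matrix (Fin n) (Fin n) ℝ)
    (hPDE : ∀ (t : ℝ) (x : ℝ × ℝ), HasDerivAt (fun s => B s x)
      ((1 / 2 : ℝ) •
        ((lap (fun y => B t y) x * (B t x)ᵀ - B t x * (lap (fun y => B t y) x)ᵀ) * B t x)) t)
    (h0 : ∀ x : ℝ × ℝ, (B 0 x)ᵀ * B 0 x = 1) :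
    ∀ (t : ℝ) (x : ℝ × ℝ), (B t x)ᵀ * B t x = 1 := by
  intro t x
  let A s := (1 / 2 : ℝ) •
    (lap (fun y => B s y) x * (B s x)ᵀ - B s x * (lap (fun y => B s y) x)ᵀ)
  have hA s : (A s)ᵀ = -A s := by
    rw [transpose_smul, transpose_mul_transpose_sub_mul_transpose, smul_neg]
  have hB s : HasDerivAt (fun u => B u x) (A s * B s x) s := by
    rw [smul_mul_assoc]; exact hPDE s x
  rw [transpose_mul_self_eq_of_skew hA hB 0 t, h0 x]

/-- Proposition 2.2: solutions of the `O_n` diffusion equation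
`∂_t B = (1/2)(Δ_x B · Bᵀ - B · (Δ_x B)ᵀ) B` with pointwise orthogonal initial data
remain pointwise orthogonal for all time. -/
theorem stmt1 (n : ℕ) (hn : 1 ≤ n) (B : ℝ → ℝ × ℝ → Matrix (Fin n) (Fin n) ℝ)
    (hBt : ∀ x : ℝ × ℝ, Differentiable ℝ (fun t => B t x))
    (hBx : ∀ t : ℝ, ContDiff ℝ 2 (fun x => B t x))
    (hPDE : ∀ (t : ℝ) (x : ℝ × ℝ), HasDerivAt (fun s => B s x)
      ((1 / 2 : ℝ) •
        ((lap (fun y => B t y) x * (B t x)ᵀ - B t x * (lap (fun y => B t y) x)ᵀ) * B t x)) t)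
    (h0 : ∀ x : ℝ × ℝ, (B 0 x)ᵀ * B 0 x = 1) :
    ∀ (t : ℝ) (x : ℝ × ℝ), (B t x)ᵀ * B t x = 1 :=
  stmt1_general n B hPDE h0
end

section
/- Let η : ℝ² → ℝ be twice continuously differentiable and define B(x) = R(η(x)), where R(θ) is the 2 × 2 rotation matrix. Then for every x ∈ ℝ², (ΔB(x))ᵀ·B(x) = [[−|∇η(x)|², Δη(x)],[−Δη(x), −|∇η(x)|²]], where |∇η|² = (∂_{x₁}η)² + (∂_{x₂}η)². Consequently, the matrix (ΔB(x))ᵀ·B(x) is symmetric if and only if Δη(x) = 0; that is, B is a harmonic orthogonal matrix-valued field (satisfying (ΔB)ᵀB − Bᵀ(ΔB) = 0 and BᵀB = I everywhere) if and only if η is harmonic. -/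
open Matrix

attribute [local instance] Matrix.frobeniusNormedAddCommGroup Matrix.frobeniusNormedSpace

/-- The partial derivative in the first variable of `u : ℝ² → E`. -/
noncomputable def pd1 {E : Type*} [NormedAddCommGroup E] [NormedSpace ℝ E]
    (u : ℝ × ℝ → E) (x : ℝ × ℝ) : E :=
  deriv (fun s => u (s, x.2)) x.1

/-- The partial derivative in the second variable of `u : ℝ² → E`. -/
noncomputable def pd2 {E : Type*} [NormedAddCommGroup E] [NormedSpace ℝ E]
    (u : ℝ × ℝ → E) (x : ℝ × ℝ) : E :=
  deriv (fun s => u (x.1, s)) x.2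

/-- The `2 × 2` rotation matrix of angle `θ`. -/
noncomputable def rot (θ : ℝ) : Matrix (Fin 2) (Fin 2) ℝ :=
  !![Real.cos θ, -Real.sin θ; Real.sin θ, Real.cos θ]

/-!
Since `R'(θ) = R(θ + π/2)` and `R''(θ) = -R(θ)`, the chain rule for the Laplacian gives
`ΔB = Δη • R(η + π/2) - |∇η|² • R(η)`. As `R(a)ᵀ R(b) = R(b - a)`, this turns `(ΔB)ᵀ B` into
`Δη • R(-π/2) - |∇η|² • I`, whose antisymmetric part `Δη • R(-π/2)` vanishes exactly when `Δη = 0`.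
-/

namespace Matrix

theorem isSymm_fin_two_iff {α : Type*} {a b c d : α} : (!![a, b; c, d]).IsSymm ↔ b = c := by
  rw [IsSymm, ← ext_iff, Fin.forall_fin_two, Fin.forall_fin_two, Fin.forall_fin_two]
  simp only [transpose_apply, of_apply, cons_val', cons_val_zero, cons_val_one, empty_val',
    cons_val_fin_one]
  constructor
  · exact fun h => h.1.2.symm
  · rintro rfl
    simp

theorem transpose_mul_sub_transpose_mul_eq_zero_iff {n α : Type*} [Fintype n] [CommRing α]
    {A B : Matrix n n α} : Aᵀ * B - Bᵀ * A = 0 ↔ (Aᵀ * B).IsSymm := by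
  rw [sub_eq_zero, IsSymm, transpose_mul, transpose_transpose, eq_comm]

end Matrix

open Real

section ChainRule

variable {E : Type*} [NormedAddCommGroup E] [NormedSpace ℝ E] {F F' F'' : ℝ → E}

theorem deriv_deriv_comp (hF : ∀ θ, HasDerivAt F (F' θ) θ) (hF' : ∀ θ, HasDerivAt F' (F'' θ) θ)
    {g : ℝ → ℝ} (hg : Differentiable ℝ g) {t : ℝ} (hg' : DifferentiableAt ℝ (deriv g) t) :
    deriv (fun s => deriv (fun s' => F (g s')) s) t =
      deriv (deriv g) t • F' (g t) + deriv g t ^ 2 • F'' (g t) := by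
  have hd : (fun s => deriv (fun s' => F (g s')) s) = fun s => deriv g s • F' (g s) :=
    funext fun s => ((hF (g s)).scomp s (hg s).hasDerivAt).deriv
  have h : HasDerivAt (fun s => deriv g s • F' (g s)) _ t :=
    hg'.hasDerivAt.smul ((hF' (g t)).scomp t (hg t).hasDerivAt)
  rw [hd, h.deriv, pow_two, mul_smul, add_comm]

theorem lap_comp (hF : ∀ θ, HasDerivAt F (F' θ) θ) (hF' : ∀ θ, HasDerivAt F' (F'' θ) θ)
    {η : ℝ × ℝ → ℝ} (hη : ContDiff ℝ 2 η) (x : ℝ × ℝ) :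
    lap (fun y => F (η y)) x =
      lap η x • F' (η x) + (pd1 η x ^ 2 + pd2 η x ^ 2) • F'' (η x) := by
  have hdiff : ∀ {g : ℝ → ℝ}, ContDiff ℝ 2 g → Differentiable ℝ g ∧ Differentiable ℝ (deriv g) :=
    fun hg => ⟨hg.differentiable two_ne_zero, (hg.iterate_deriv' 1 1).differentiable one_ne_zero⟩
  obtain ⟨h₁, h₁'⟩ := hdiff (g := fun s => η (s, x.2)) (hη.comp (contDiff_id.prodMk contDiff_const))
  obtain ⟨h₂, h₂'⟩ := hdiff (g := fun s => η (x.1, s)) (hη.comp (contDiff_const.prodMk contDiff_id))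
  rw [lap, lap, pd1, pd2, deriv_deriv_comp hF hF' h₁ (h₁' _), deriv_deriv_comp hF hF' h₂ (h₂' _),
    Prod.mk.eta]
  module

end ChainRule

theorem rot_zero : rot 0 = 1 := by
  rw [rot, one_fin_two]
  simp

theorem rot_neg_pi_div_two : rot (-(π / 2)) = !![0, 1; -1, 0] := by
  simp [rot]

theorem rot_add_pi_div_two_add_pi_div_two (θ : ℝ) : rot (θ + π / 2 + π / 2) = -rot θ := by
  ext i j
  fin_cases i <;> fin_cases j <;> simp [rot, add_assoc]

theorem rot_transpose_mul_rot (a b : ℝ) : (rot a)ᵀ * rot b = rot (b - a) := by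
  ext i j
  fin_cases i <;> fin_cases j <;> simp [rot, mul_apply, Fin.sum_univ_two, cos_sub, sin_sub] <;> ring

theorem rot_eq_cos_smul_add_sin_smul (θ : ℝ) :
    rot θ = cos θ • 1 + sin θ • !![0, -1; 1, 0] := by
  ext i j
  fin_cases i <;> fin_cases j <;> simp [rot]

theorem hasDerivAt_rot (θ : ℝ) : HasDerivAt rot (rot (θ + π / 2)) θ := by
  have h := ((hasDerivAt_cos θ).smul_const (1 : Matrix (Fin 2) (Fin 2) ℝ)).add
    ((hasDerivAt_sin θ).smul_const !![(0 : ℝ), -1; 1, 0])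
  rw [rot_eq_cos_smul_add_sin_smul (θ + π / 2), cos_add_pi_div_two, sin_add_pi_div_two,
    funext rot_eq_cos_smul_add_sin_smul]
  exact h.congr_deriv (by module)

theorem hasDerivAt_rot_add_pi_div_two (θ : ℝ) :
    HasDerivAt (fun θ => rot (θ + π / 2)) (-rot θ) θ := by
  rw [← rot_add_pi_div_two_add_pi_div_two]
  exact (hasDerivAt_rot _).comp_add_const θ (π / 2)

theorem lap_rot_comp {η : ℝ × ℝ → ℝ} (hη : ContDiff ℝ 2 η) (x : ℝ × ℝ) :
    lap (fun y => rot (η y)) x =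
      lap η x • rot (η x + π / 2) - (pd1 η x ^ 2 + pd2 η x ^ 2) • rot (η x) := by
  rw [lap_comp hasDerivAt_rot hasDerivAt_rot_add_pi_div_two hη, smul_neg, sub_eq_add_neg]

theorem lap_rot_comp_transpose_mul {η : ℝ × ℝ → ℝ} (hη : ContDiff ℝ 2 η) (x : ℝ × ℝ) :
    (lap (fun y => rot (η y)) x)ᵀ * rot (η x) =
      !![-(pd1 η x ^ 2 + pd2 η x ^ 2), lap η x; -lap η x, -(pd1 η x ^ 2 + pd2 η x ^ 2)] := by
  rw [lap_rot_comp hη, transpose_sub, transpose_smul, transpose_smul, sub_mul, smul_mul_assoc,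
    smul_mul_assoc, rot_transpose_mul_rot, rot_transpose_mul_rot, sub_self,
    show η x - (η x + π / 2) = -(π / 2) by ring, rot_neg_pi_div_two, rot_zero, one_fin_two]
  ext i j
  fin_cases i <;> fin_cases j <;> simp

/-- For `B = R(η)` with `η` twice continuously differentiable,
`(ΔB)ᵀ B = [[−|∇η|², Δη],[−Δη, −|∇η|²]]`; consequently `(ΔB)ᵀ B` is symmetric iff
`Δη = 0`, and `B` is a harmonic orthogonal matrix-valued field iff `η` is harmonic. -/
theorem stmt4 (η : ℝ × ℝ → ℝ) (hη : ContDiff ℝ 2 η)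
    (B : ℝ × ℝ → Matrix (Fin 2) (Fin 2) ℝ) (hB : ∀ x : ℝ × ℝ, B x = rot (η x)) :
    (∀ x : ℝ × ℝ, (lap B x)ᵀ * B x =
        !![-(pd1 η x ^ 2 + pd2 η x ^ 2), lap η x;
           -(lap η x), -(pd1 η x ^ 2 + pd2 η x ^ 2)]) ∧
      (∀ x : ℝ × ℝ, ((lap B x)ᵀ * B x).IsSymm ↔ lap η x = 0) ∧
      (((∀ x : ℝ × ℝ, (lap B x)ᵀ * B x - (B x)ᵀ * lap B x = 0) ∧
          ∀ x : ℝ × ℝ, (B x)ᵀ * B x = 1) ↔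
        ∀ x : ℝ × ℝ, lap η x = 0) := by
  obtain rfl : B = fun y => rot (η y) := funext hB
  have key := lap_rot_comp_transpose_mul hη
  have symm_iff (x : ℝ × ℝ) : ((lap (fun y => rot (η y)) x)ᵀ * rot (η x)).IsSymm ↔ lap η x = 0 := by
    rw [key x, Matrix.isSymm_fin_two_iff, eq_neg_iff_add_eq_zero, add_self_eq_zero]
  have orthogonal (x : ℝ × ℝ) : (rot (η x))ᵀ * rot (η x) = 1 := by
    rw [rot_transpose_mul_rot, sub_self, rot_zero]
  refine ⟨key, symm_iff, ?_⟩
  simp only [Matrix.transpose_mul_sub_transpose_mul_eq_zero_iff, symm_iff, orthogonal, implies_true,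
    and_true]
end

section
/- Let η₋, η₊ ∈ ℝ and set ξ₁ = (η₋ + η₊)/2, ξ₂ = (η₋ − η₊)/2. Define B : ℝ → M(2,ℝ) by B(z) = R(ξ₁)·diag(1, tanh(z/√2))·R(ξ₂)ᵀ, where R(θ) is the 2 × 2 rotation matrix. Then: (i) B is twice differentiable and B''(z) = B(z)·(B(z)ᵀ·B(z) − I) for all z ∈ ℝ; (ii) B(z) → [[cos η₋, sin η₋],[sin η₋, −cos η₋]] as z → −∞, a matrix with orthogonal columns and determinant −1; and (iii) B(z) → [[cos η₊, −sin η₊],[sin η₊, cos η₊]] as z → +∞, a rotation matrix with determinant +1. -/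
/-!
Write `B(z) = U D(z) Vᵀ` with `U = R(ξ₁)`, `V = R(ξ₂)` orthogonal and `D(z) = diag(1, f(z))`.
Orthogonality gives `BᵀB - I = V (DᵀD - I) Vᵀ`, hence `B(BᵀB - I) = U D(DᵀD - I) Vᵀ`, so the
matrix equation `B'' = B(BᵀB - I)` reduces to the scalar equation `d'' = d³ - d` for each
diagonal entry. The entry `1` is a constant solution and `f(z) = tanh(z/√2)` is the kink solution,
since `f' = (1 - f²)/√2`. As `z → ±∞`, `f → ±1`, and `R(ξ₁) diag(1, ±1) R(ξ₂)ᵀ` is the rotation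
`R(ξ₁ - ξ₂) = R(η₊)`, resp. the reflection `R(ξ₁ + ξ₂) diag(1, -1)` with `ξ₁ + ξ₂ = η₋`.
-/

open Matrix Filter

attribute [local instance] Matrix.frobeniusNormedAddCommGroup Matrix.frobeniusNormedSpace

namespace Real

theorem hasDerivAt_tanh (x : ℝ) : HasDerivAt tanh (1 - tanh x ^ 2) x := by
  have h := (hasDerivAt_sinh x).div (hasDerivAt_cosh x) (cosh_pos x).ne'
  rw [show tanh = fun y => sinh y / cosh y from funext tanh_eq_sinh_div_cosh]
  refine h.congr_deriv ?_
  field_simp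

theorem tanh_eq_one_sub_two_div (x : ℝ) : tanh x = 1 - 2 / (exp (2 * x) + 1) := by
  rw [tanh_eq_sinh_div_cosh, sinh_eq, cosh_eq, two_mul, exp_add, exp_neg]
  field_simp
  ring

theorem tendsto_tanh_atTop : Tendsto tanh atTop (nhds 1) := by
  have h : Tendsto (fun x => exp (2 * x) + 1) atTop atTop :=
    tendsto_atTop_add_const_right _ 1
      (tendsto_exp_atTop.comp (tendsto_id.const_mul_atTop two_pos))
  simpa [funext tanh_eq_one_sub_two_div] using (h.const_div_atTop 2).const_sub 1

theorem tendsto_tanh_atBot : Tendsto tanh atBot (nhds (-1)) := by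
  simpa [Function.comp_def, tanh_neg] using (tendsto_tanh_atTop.comp tendsto_neg_atBot_atTop).neg

theorem hasDerivAt_tanh_div_sqrt_two (z : ℝ) :
    HasDerivAt (fun z => tanh (z / √2)) ((1 - tanh (z / √2) ^ 2) / √2) z := by
  refine ((hasDerivAt_tanh (z / √2)).comp z ((hasDerivAt_id z).div_const √2)).congr_deriv ?_
  simp [div_eq_mul_inv]

theorem hasDerivAt_one_sub_tanh_sq_div_sqrt_two (z : ℝ) :
    HasDerivAt (fun z => (1 - tanh (z / √2) ^ 2) / √2) (tanh (z / √2) ^ 3 - tanh (z / √2)) z := by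
  refine (((hasDerivAt_tanh_div_sqrt_two z).pow 2).const_sub 1).div_const √2 |>.congr_deriv ?_
  have h2 : √2 * √2 = 2 := mul_self_sqrt zero_le_two
  field_simp
  linear_combination (tanh (z / √2) - tanh (z / √2) ^ 3) * h2

end Real

theorem HasDerivAt.const_vecCons {f : ℝ → ℝ} {f' z : ℝ} (a : ℝ) (hf : HasDerivAt f f' z) :
    HasDerivAt (fun z => ![a, f z]) ![0, f'] z :=
  hasDerivAt_pi.2 (Fin.forall_fin_two.2 ⟨by simpa using hasDerivAt_const z a, by simpa using hf⟩)

theorem Filter.Tendsto.const_vecCons {α : Type*} {l : Filter α} {f : α → ℝ} {c : ℝ} (a : ℝ)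
    (hf : Tendsto f l (nhds c)) : Tendsto (fun x => ![a, f x]) l (nhds ![a, c]) :=
  tendsto_pi_nhds.2 (Fin.forall_fin_two.2 ⟨by simpa using tendsto_const_nhds, by simpa using hf⟩)

section DiagonalSandwich

variable {n : Type*} [Fintype n] [DecidableEq n]

noncomputable def diagonalSandwich (U W : Matrix n n ℝ) : (n → ℝ) →L[ℝ] Matrix n n ℝ :=
  LinearMap.toContinuousLinearMap
    (LinearMap.mulRight ℝ W ∘ₗ LinearMap.mulLeft ℝ U ∘ₗ diagonalLinearMap n ℝ ℝ)

theorem HasDerivAt.mul_diagonal_mul {d : ℝ → n → ℝ} {d' : n → ℝ} {z : ℝ}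
    (hd : HasDerivAt d d' z) (U W : Matrix n n ℝ) :
    HasDerivAt (fun z => U * diagonal (d z) * W) (U * diagonal d' * W) z :=
  (diagonalSandwich U W).hasFDerivAt.comp_hasDerivAt z hd

theorem Filter.Tendsto.mul_diagonal_mul {α : Type*} {l : Filter α} {d : α → n → ℝ} {e : n → ℝ}
    (hd : Tendsto d l (nhds e)) (U W : Matrix n n ℝ) :
    Tendsto (fun x => U * diagonal (d x) * W) l (nhds (U * diagonal e * W)) :=
  ((diagonalSandwich U W).continuous.tendsto e).comp hd

end DiagonalSandwich

theorem mul_transpose_mul_sub_one_of_mem_orthogonalGroup {n R : Type*} [Fintype n]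
    [DecidableEq n] [CommRing R] {U V : Matrix n n R} (hU : U ∈ orthogonalGroup n R)
    (hV : V ∈ orthogonalGroup n R) (D : Matrix n n R) :
    U * D * Vᵀ * ((U * D * Vᵀ)ᵀ * (U * D * Vᵀ) - 1) = U * (D * (Dᵀ * D - 1)) * Vᵀ := by
  rw [mem_orthogonalGroup_iff'] at hU
  have hV' : Vᵀ * V = 1 := (mem_orthogonalGroup_iff' n R).1 hV
  rw [mem_orthogonalGroup_iff] at hV
  have hgram : (U * D * Vᵀ)ᵀ * (U * D * Vᵀ) - 1 = V * (Dᵀ * D - 1) * Vᵀ := by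
    simp only [transpose_mul, transpose_transpose, Matrix.mul_sub, Matrix.sub_mul, Matrix.mul_one,
      hV, Matrix.mul_assoc, ← Matrix.mul_assoc Uᵀ U, hU, Matrix.one_mul]
  rw [hgram]
  simp only [Matrix.mul_assoc, ← Matrix.mul_assoc Vᵀ V, hV', Matrix.one_mul]

theorem diagonal_mul_transpose_mul_sub_one {n R : Type*} [Fintype n] [DecidableEq n] [CommRing R]
    (d : n → R) :
    diagonal d * ((diagonal d)ᵀ * diagonal d - 1) = diagonal fun i => d i ^ 3 - d i := by
  rw [diagonal_transpose, diagonal_mul_diagonal, ← diagonal_one, diagonal_sub,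
    diagonal_mul_diagonal]
  congr 1
  ext i
  ring

theorem hasDerivAt_deriv_mul_diagonal_mul {n : Type*} [Fintype n] [DecidableEq n]
    {U V : Matrix n n ℝ} (hU : U ∈ orthogonalGroup n ℝ) (hV : V ∈ orthogonalGroup n ℝ)
    {d d' : ℝ → n → ℝ} (hd : ∀ z, HasDerivAt d (d' z) z)
    (hd' : ∀ z, HasDerivAt d' (fun i => d z i ^ 3 - d z i) z) (z : ℝ) :
    HasDerivAt (deriv fun z => U * diagonal (d z) * Vᵀ)
      (U * diagonal (d z) * Vᵀ * ((U * diagonal (d z) * Vᵀ)ᵀ * (U * diagonal (d z) * Vᵀ) - 1)) z := by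
  have hderiv : deriv (fun z => U * diagonal (d z) * Vᵀ) = fun z => U * diagonal (d' z) * Vᵀ :=
    funext fun z => ((hd z).mul_diagonal_mul U Vᵀ).deriv
  rw [hderiv, mul_transpose_mul_sub_one_of_mem_orthogonalGroup hU hV,
    diagonal_mul_transpose_mul_sub_one]
  exact (hd' z).mul_diagonal_mul U Vᵀ

theorem rot_mem_specialOrthogonalGroup (θ : ℝ) : rot θ ∈ specialOrthogonalGroup (Fin 2) ℝ := by
  simp [rot]

theorem rot_mul_rot (a b : ℝ) : rot a * rot b = rot (a + b) := by
  ext i j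
  fin_cases i <;> fin_cases j <;> simp [rot, Real.cos_add, Real.sin_add] <;> ring

theorem transpose_rot (θ : ℝ) : (rot θ)ᵀ = rot (-θ) := by
  ext i j
  fin_cases i <;> fin_cases j <;> simp [rot]

theorem diagonal_one_neg_one_mul_rot (θ : ℝ) :
    diagonal ![1, -1] * rot θ = rot (-θ) * diagonal ![1, -1] := by
  ext i j
  fin_cases i <;> fin_cases j <;> simp [rot]

theorem rot_mul_diagonal_one_one_mul_transpose_rot (a b : ℝ) :
    rot a * diagonal ![1, 1] * (rot b)ᵀ = rot (a - b) := by
  have h : diagonal ![(1 : ℝ), 1] = 1 := by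
    ext i j
    fin_cases i <;> fin_cases j <;> simp
  rw [h, Matrix.mul_one, transpose_rot, rot_mul_rot, sub_eq_add_neg]

noncomputable def reflectionMatrix (θ : ℝ) : Matrix (Fin 2) (Fin 2) ℝ :=
  !![Real.cos θ, Real.sin θ; Real.sin θ, -Real.cos θ]

theorem rot_mul_diagonal_one_neg_one (θ : ℝ) : rot θ * diagonal ![1, -1] = reflectionMatrix θ := by
  ext i j
  fin_cases i <;> fin_cases j <;> simp [rot, reflectionMatrix]

theorem rot_mul_diagonal_one_neg_one_mul_transpose_rot (a b : ℝ) :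
    rot a * diagonal ![1, -1] * (rot b)ᵀ = reflectionMatrix (a + b) := by
  rw [transpose_rot, Matrix.mul_assoc, diagonal_one_neg_one_mul_rot, neg_neg, ← Matrix.mul_assoc,
    rot_mul_rot, rot_mul_diagonal_one_neg_one]

theorem reflectionMatrix_mem_orthogonalGroup (θ : ℝ) :
    reflectionMatrix θ ∈ orthogonalGroup (Fin 2) ℝ := by
  rw [← rot_mul_diagonal_one_neg_one]
  refine mul_mem (rot_mem_specialOrthogonalGroup θ).1 ?_
  rw [mem_orthogonalGroup_iff]
  ext i j
  fin_cases i <;> fin_cases j <;> simp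

theorem det_reflectionMatrix (θ : ℝ) : (reflectionMatrix θ).det = -1 := by
  rw [← rot_mul_diagonal_one_neg_one, det_mul,
    (mem_specialOrthogonalGroup_iff.1 (rot_mem_specialOrthogonalGroup θ)).2]
  simp

open Real in
/-- Proposition 3.2: the explicit transition profile
`B(z) = R(ξ₁) diag(1, tanh(z/√2)) R(ξ₂)ᵀ` with `ξ₁ = (η₋+η₊)/2`, `ξ₂ = (η₋−η₊)/2`
solves `B'' = B(BᵀB - I)` and connects a matrix in `SO_2⁻` at `z = -∞` to a rotation in
`SO_2` at `z = +∞`. -/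
theorem stmt10 (ηm ηp : ℝ) (ξ₁ ξ₂ : ℝ) (hξ₁ : ξ₁ = (ηm + ηp) / 2) (hξ₂ : ξ₂ = (ηm - ηp) / 2)
    (B : ℝ → Matrix (Fin 2) (Fin 2) ℝ)
    (hB : ∀ z : ℝ,
      B z = rot ξ₁ * Matrix.diagonal ![1, Real.tanh (z / Real.sqrt 2)] * (rot ξ₂)ᵀ) :
    ((∀ z : ℝ, HasDerivAt B (deriv B z) z) ∧
        ∀ z : ℝ, HasDerivAt (deriv B) (B z * ((B z)ᵀ * B z - 1)) z) ∧
      (Tendsto B atBot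
          (nhds !![Real.cos ηm, Real.sin ηm; Real.sin ηm, -Real.cos ηm]) ∧
        (!![Real.cos ηm, Real.sin ηm; Real.sin ηm, -Real.cos ηm]ᵀ *
            !![Real.cos ηm, Real.sin ηm; Real.sin ηm, -Real.cos ηm] = 1) ∧
        (!![Real.cos ηm, Real.sin ηm; Real.sin ηm, -Real.cos ηm] : Matrix (Fin 2) (Fin 2) ℝ).det = -1) ∧
      (Tendsto B atTop (nhds (rot ηp)) ∧ (rot ηp)ᵀ * rot ηp = 1 ∧ (rot ηp).det = 1) := by
  obtain rfl : B = fun z => rot ξ₁ * diagonal ![1, tanh (z / √2)] * (rot ξ₂)ᵀ := funext hB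
  have hd (z : ℝ) := (hasDerivAt_tanh_div_sqrt_two z).const_vecCons 1
  have hd' (z : ℝ) : HasDerivAt (fun z => ![0, (1 - tanh (z / √2) ^ 2) / √2])
      (fun i => ![1, tanh (z / √2)] i ^ 3 - ![1, tanh (z / √2)] i) z := by
    convert (hasDerivAt_one_sub_tanh_sq_div_sqrt_two z).const_vecCons 0 using 1
    ext i
    fin_cases i <;> simp
  have hs : Tendsto (fun z : ℝ => z / √2) atTop atTop := tendsto_id.atTop_div_const (by positivity)
  have hs' : Tendsto (fun z : ℝ => z / √2) atBot atBot := tendsto_id.atBot_div_const (by positivity)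
  have hm : ξ₁ + ξ₂ = ηm := by rw [hξ₁, hξ₂]; ring
  have hp : ξ₁ - ξ₂ = ηp := by rw [hξ₁, hξ₂]; ring
  have hrot := rot_mem_specialOrthogonalGroup
  refine ⟨⟨fun z => ((hd z).mul_diagonal_mul _ _).differentiableAt.hasDerivAt,
      hasDerivAt_deriv_mul_diagonal_mul (hrot ξ₁).1 (hrot ξ₂).1 hd hd'⟩,
    ⟨?_, (mem_orthogonalGroup_iff' _ _).1 (reflectionMatrix_mem_orthogonalGroup ηm),
      det_reflectionMatrix ηm⟩,
    ⟨?_, (mem_orthogonalGroup_iff' _ _).1 (hrot ηp).1,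
      (mem_specialOrthogonalGroup_iff.1 (hrot ηp)).2⟩⟩
  · show Tendsto _ atBot (nhds (reflectionMatrix ηm))
    rw [← hm, ← rot_mul_diagonal_one_neg_one_mul_transpose_rot]
    exact ((tendsto_tanh_atBot.comp hs').const_vecCons 1).mul_diagonal_mul _ _
  · rw [← hp, ← rot_mul_diagonal_one_one_mul_transpose_rot]
    exact ((tendsto_tanh_atTop.comp hs).const_vecCons 1).mul_diagonal_mul _ _
end
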